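/- arXiv:1406.0047 — 2 statements merged into one kernel-verified Lean document; each statement's English description precedes it below -/
import Mathlib

section
/- Let d ≥ 1 and let l, m be real numbers with 0 < l < d, 0 < m < d, and l + m - d > 0. Then there exists a constant C > 0 such that for every nonzero k ∈ ℤ^d, the sum over all pairs (k₁, k₂) of nonzero lattice points with k₁ + k₂ = k of 1/(|k₁|^l |k₂|^m) is at most C / |k|^(l+m-d). -/
noncomputable section

def znorm {d : ℕ} (k : Fin d → ℤ) : ℝ := Real.sqrt (∑ i, ((k i : ℝ)) ^ 2)

/-!
The Euclidean norm is comparable to the sup norm `‖v‖∞ ≤ |v| ≤ √d ‖v‖∞`, so we may work with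
the latter. If `k₁ + k₂ = k` and `n = ‖k‖∞`, the larger of `‖k₁‖∞, ‖k₂‖∞` is at least
`max(n, smaller one) / 2`; hence each term is at most `2^l ‖k₂‖∞^(-m) max(n, ‖k₂‖∞)^(-l)` or the
symmetric expression in `k₁`. The sphere `{‖v‖∞ = s}` has `O(s^(d-1))` points, so summing over
spheres reduces everything to `∑ₛ s^(d-1-m) max(n, s)^(-l) = O(n^(d-l-m))`, by comparison with
integrals: the part `s ≤ n` is controlled because `m < d`, the part `s > n` because `l + m > d`.
-/

open Finset Real

lemma AntitoneOn.sum_Ioc_le_integral {f : ℝ → ℝ} {N M : ℕ} (hNM : N ≤ M)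
    (hf : AntitoneOn f (Set.Icc N M)) : ∑ s ∈ Ioc N M, f s ≤ ∫ x in N..M, f x := by
  have := hf.sum_le_integral_Ico hNM
  rwa [← Ico_add_one_add_one_eq_Ioc, ← Finset.sum_Ico_add' (c := 1)]

lemma sum_Ioc_rpow_neg_le {a : ℝ} (ha : 1 < a) {N : ℕ} (hN : 1 ≤ N) (M : ℕ) :
    ∑ s ∈ Ioc N M, (s : ℝ) ^ (-a) ≤ (N : ℝ) ^ (1 - a) / (a - 1) := by
  have hN0 : (0 : ℝ) < N := by exact_mod_cast hN
  rcases le_total M N with hMN | hNM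
  · rw [Ioc_eq_empty_of_le hMN, sum_empty]
    exact div_nonneg (rpow_nonneg hN0.le _) (by linarith)
  have hanti : AntitoneOn (fun x : ℝ ↦ x ^ (-a)) (Set.Icc N M) :=
    (antitoneOn_rpow_Ioi_of_exponent_nonpos (by linarith)).mono fun x hx ↦ hN0.trans_le hx.1
  have h0 : (0 : ℝ) ∉ Set.uIcc (N : ℝ) M := by
    rw [Set.uIcc_of_le (by exact_mod_cast hNM)]
    exact fun h ↦ hN0.not_ge h.1
  calc ∑ s ∈ Ioc N M, (s : ℝ) ^ (-a) ≤ ∫ x in (N : ℝ)..M, x ^ (-a) := hanti.sum_Ioc_le_integral hNM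
    _ = ((N : ℝ) ^ (1 - a) - (M : ℝ) ^ (1 - a)) / (a - 1) := by
      rw [integral_rpow (Or.inr ⟨by linarith, h0⟩), ← neg_div_neg_eq]
      ring_nf
    _ ≤ (N : ℝ) ^ (1 - a) / (a - 1) := by
      gcongr
      exact sub_le_self _ (rpow_nonneg (Nat.cast_nonneg _) _)

lemma sum_Icc_rpow_le {b : ℝ} (hb : -1 < b) (N : ℕ) :
    ∑ s ∈ Icc 1 N, (s : ℝ) ^ b ≤ (1 + (b + 1)⁻¹) * (N : ℝ) ^ (b + 1) := by
  rcases Nat.eq_zero_or_pos N with rfl | hN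
  · simp [zero_rpow (by linarith : b + 1 ≠ 0)]
  have hN0 : (0 : ℝ) < N := by exact_mod_cast hN
  have hinv : 0 < (b + 1)⁻¹ := inv_pos.mpr (by linarith)
  rcases le_or_gt 0 b with hb0 | hb0
  · calc ∑ s ∈ Icc 1 N, (s : ℝ) ^ b ≤ ∑ _s ∈ Icc 1 N, (N : ℝ) ^ b := by
          gcongr with s hs
          exact_mod_cast (mem_Icc.mp hs).2
      _ = (N : ℝ) ^ (b + 1) := by simp [rpow_add hN0, mul_comm]
      _ ≤ (1 + (b + 1)⁻¹) * (N : ℝ) ^ (b + 1) := by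
          nlinarith [rpow_pos_of_pos hN0 (b + 1)]
  have hanti : AntitoneOn (fun x : ℝ ↦ x ^ b) (Set.Icc (1 : ℕ) N) :=
    (antitoneOn_rpow_Ioi_of_exponent_nonpos hb0.le).mono fun x hx ↦
      one_pos.trans_le (by exact_mod_cast hx.1)
  have hone : (1 : ℝ) ≤ (N : ℝ) ^ (b + 1) := one_le_rpow (by exact_mod_cast hN) (by linarith)
  calc ∑ s ∈ Icc 1 N, (s : ℝ) ^ b = 1 + ∑ s ∈ Ioc 1 N, (s : ℝ) ^ b := by
        rw [Icc_eq_cons_Ioc hN, sum_cons]; simp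
    _ ≤ 1 + ∫ x in ((1 : ℕ) : ℝ)..N, x ^ b := by gcongr; exact hanti.sum_Ioc_le_integral hN
    _ = 1 + ((N : ℝ) ^ (b + 1) - 1) / (b + 1) := by
        rw [integral_rpow (Or.inl hb)]; simp
    _ ≤ (1 + (b + 1)⁻¹) * (N : ℝ) ^ (b + 1) := by
        rw [div_eq_mul_inv]; nlinarith

lemma sum_rpow_mul_max_rpow_neg_le {b f : ℝ} (hb : -1 < b) (hbf : b + 1 < f) {n : ℕ}
    (hn : 1 ≤ n) (S : ℕ) :
    ∑ s ∈ Icc 1 S, (s : ℝ) ^ b * max (n : ℝ) s ^ (-f)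
      ≤ (1 + (b + 1)⁻¹ + (f - b - 1)⁻¹) * (n : ℝ) ^ (b + 1 - f) := by
  have hn0 : (0 : ℝ) < n := by exact_mod_cast hn
  have hsub : Icc 1 S ⊆ Icc 1 n ∪ Ioc n S := by
    intro s hs
    simp only [mem_union, mem_Icc, mem_Ioc] at hs ⊢
    omega
  have hnear : ∑ s ∈ Icc 1 n, (s : ℝ) ^ b * max (n : ℝ) s ^ (-f)
      = (n : ℝ) ^ (-f) * ∑ s ∈ Icc 1 n, (s : ℝ) ^ b := by
    rw [mul_sum]
    refine sum_congr rfl fun s hs ↦ ?_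
    rw [max_eq_left (by exact_mod_cast (mem_Icc.mp hs).2), mul_comm]
  have hfar : ∑ s ∈ Ioc n S, (s : ℝ) ^ b * max (n : ℝ) s ^ (-f)
      = ∑ s ∈ Ioc n S, (s : ℝ) ^ (-(f - b)) := by
    refine sum_congr rfl fun s hs ↦ ?_
    have hs0 : (0 : ℝ) < s := hn0.trans (by exact_mod_cast (mem_Ioc.mp hs).1)
    rw [max_eq_right (by exact_mod_cast (mem_Ioc.mp hs).1.le), ← rpow_add hs0]
    ring_nf
  calc ∑ s ∈ Icc 1 S, (s : ℝ) ^ b * max (n : ℝ) s ^ (-f)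
      ≤ ∑ s ∈ Icc 1 n ∪ Ioc n S, (s : ℝ) ^ b * max (n : ℝ) s ^ (-f) :=
        sum_le_sum_of_subset_of_nonneg hsub fun _ _ _ ↦ by positivity
    _ = (n : ℝ) ^ (-f) * ∑ s ∈ Icc 1 n, (s : ℝ) ^ b + ∑ s ∈ Ioc n S, (s : ℝ) ^ (-(f - b)) := by
        rw [sum_union (disjoint_left.mpr fun s h₁ h₂ ↦ by
          simp only [mem_Icc, mem_Ioc] at h₁ h₂; omega), hnear, hfar]
    _ ≤ (n : ℝ) ^ (-f) * ((1 + (b + 1)⁻¹) * (n : ℝ) ^ (b + 1))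
          + (n : ℝ) ^ (1 - (f - b)) / (f - b - 1) := by
        gcongr
        · exact sum_Icc_rpow_le hb n
        · exact sum_Ioc_rpow_neg_le (by linarith) hn S
    _ = (1 + (b + 1)⁻¹ + (f - b - 1)⁻¹) * (n : ℝ) ^ (b + 1 - f) := by
        rw [mul_left_comm, ← rpow_add hn0, div_eq_mul_inv]
        ring_nf

lemma rpow_neg_le_two_rpow_mul {x a l : ℝ} (ha : 0 < a) (hax : a ≤ 2 * x) (hl : 0 ≤ l) :
    x ^ (-l) ≤ 2 ^ l * a ^ (-l) := by
  calc x ^ (-l) ≤ (a / 2) ^ (-l) :=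
        rpow_le_rpow_of_nonpos (by positivity) (by linarith) (by linarith)
    _ = 2 ^ l * a ^ (-l) := by
      rw [div_rpow ha.le zero_le_two, rpow_neg zero_le_two, div_inv_eq_mul, mul_comm]

lemma rpow_neg_mul_rpow_neg_le {x y n l m : ℝ} (hx : 0 < x) (hy : 0 < y) (hn : n ≤ x + y)
    (hl : 0 ≤ l) (hm : 0 ≤ m) :
    x ^ (-l) * y ^ (-m)
      ≤ 2 ^ l * (y ^ (-m) * max n y ^ (-l)) + 2 ^ m * (x ^ (-l) * max n x ^ (-m)) := by
  have h₁ : 0 ≤ 2 ^ l * (y ^ (-m) * max n y ^ (-l)) := by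
    have := hy.trans_le (le_max_right n y); positivity
  have h₂ : 0 ≤ 2 ^ m * (x ^ (-l) * max n x ^ (-m)) := by
    have := hx.trans_le (le_max_right n x); positivity
  rcases le_total y x with hyx | hxy
  · have := rpow_neg_le_two_rpow_mul (x := x) (hy.trans_le (le_max_right n y))
      (max_le (by linarith) (by linarith)) hl
    have : x ^ (-l) * y ^ (-m) ≤ 2 ^ l * (y ^ (-m) * max n y ^ (-l)) := by
      rw [mul_left_comm, mul_comm]; gcongr
    linarith
  · have := rpow_neg_le_two_rpow_mul (x := y) (hx.trans_le (le_max_right n x))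
      (max_le (by linarith) (by linarith)) hm
    have : x ^ (-l) * y ^ (-m) ≤ 2 ^ m * (x ^ (-l) * max n x ^ (-m)) := by
      rw [mul_left_comm]; gcongr
    linarith

variable {d : ℕ}

def supNorm (v : Fin d → ℤ) : ℕ := univ.sup fun i ↦ (v i).natAbs

lemma mem_Icc_neg_iff_supNorm_le {N : ℕ} {v : Fin d → ℤ} :
    v ∈ Icc (-N : Fin d → ℤ) N ↔ supNorm v ≤ N := by
  simp only [mem_Icc, Pi.le_def, supNorm, Finset.sup_le_iff, mem_univ, true_implies, ← forall_and]
  refine forall_congr' fun i ↦ ?_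
  simp only [Pi.neg_apply, Pi.natCast_apply]
  omega

-- `Finset.box n` is the hollow box, i.e. the sup-norm sphere of radius `n`.
lemma mem_box_of_supNorm_eq {k : ℕ} {v : Fin d → ℤ} (hv : supNorm v = k + 1) :
    v ∈ (box (k + 1) : Finset (Fin d → ℤ)) := by
  rw [box_succ_eq_sdiff, mem_sdiff, mem_Icc_neg_iff_supNorm_le, mem_Icc_neg_iff_supNorm_le]
  omega

lemma card_box_succ_le (k : ℕ) :
    #(box (k + 1) : Finset (Fin d → ℤ)) ≤ 2 * d * 3 ^ (d - 1) * (k + 1) ^ (d - 1) := by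
  have hsub : Icc (-k : Fin d → ℤ) k ⊆ Icc (-(k + 1 : ℕ)) (k + 1 : ℕ) := fun v hv ↦ by
    rw [mem_Icc_neg_iff_supNorm_le] at hv ⊢; omega
  rw [box_succ_eq_sdiff, card_sdiff_of_subset hsub, Pi.card_Icc, Pi.card_Icc]
  simp only [Pi.neg_apply, Pi.natCast_apply, Int.card_Icc, prod_const, card_univ, Fintype.card_fin]
  rw [show ((k + 1 : ℕ) + 1 - -((k + 1 : ℕ) : ℤ)).toNat = 2 * k + 3 by omega,
    show ((k : ℤ) + 1 - -(k : ℤ)).toNat = 2 * k + 1 by omega]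
  have hmono : (2 * k + 1) ^ d ≤ (2 * k + 3) ^ d := Nat.pow_le_pow_left (by omega) d
  have key := abs_pow_sub_pow_le (2 * (k : ℤ) + 3) (2 * k + 1) d
  have ha : |2 * (k : ℤ) + 3| = 2 * k + 3 := abs_of_nonneg (by positivity)
  have hb : |2 * (k : ℤ) + 1| = 2 * k + 1 := abs_of_nonneg (by positivity)
  rw [ha, hb, max_eq_left (by linarith), show 2 * (k : ℤ) + 3 - (2 * k + 1) = 2 by ring,
    abs_two, abs_of_nonneg (sub_nonneg.mpr (pow_le_pow_left₀ (by positivity) (by linarith) d))]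
    at key
  zify [hmono]
  calc _ ≤ _ := key
    _ ≤ 2 * (d : ℤ) * (3 * (k + 1)) ^ (d - 1) := by
      rw [mul_comm 2 (d : ℤ)]; gcongr; linarith
    _ = _ := by rw [mul_pow]; ring

lemma cast_supNorm (v : Fin d → ℤ) : (supNorm v : ℝ) = ‖v‖ := by
  rw [Pi.norm_def, supNorm, ← NNReal.coe_natCast, Nat.cast_finsetSup]
  congr! with i
  ext
  simp [Int.norm_eq_abs]

lemma one_le_supNorm {v : Fin d → ℤ} (hv : v ≠ 0) : 1 ≤ supNorm v := by
  have h : (0 : ℝ) < supNorm v := cast_supNorm v ▸ norm_pos_iff.mpr hv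
  exact_mod_cast h

lemma sum_comp_supNorm_le (t : Finset (Fin d → ℤ)) (ht : 0 ∉ t) {g : ℕ → ℝ}
    (hg : ∀ s, 0 ≤ g s) :
    ∑ v ∈ t, g (supNorm v)
      ≤ ∑ s ∈ Icc 1 (t.sup supNorm), ((2 * d * 3 ^ (d - 1) * s ^ (d - 1) : ℕ) : ℝ) * g s := by
  have hmaps : ∀ v ∈ t, supNorm v ∈ Icc 1 (t.sup supNorm) := fun v hv ↦
    mem_Icc.mpr ⟨one_le_supNorm (ne_of_mem_of_not_mem hv ht), le_sup hv⟩
  rw [← sum_fiberwise_of_maps_to hmaps]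
  gcongr with s hs
  obtain ⟨k, rfl⟩ : ∃ k, s = k + 1 := Nat.exists_eq_add_one.mpr (mem_Icc.mp hs).1
  calc ∑ v ∈ t with supNorm v = k + 1, g (supNorm v)
      = #{v ∈ t | supNorm v = k + 1} * g (k + 1) := by
        rw [← nsmul_eq_mul, ← sum_const]
        exact sum_congr rfl fun v hv ↦ by rw [(mem_filter.mp hv).2]
    _ ≤ ((2 * d * 3 ^ (d - 1) * (k + 1) ^ (d - 1) : ℕ) : ℝ) * g (k + 1) := by
        gcongr
        · exact hg _
        exact (card_le_card fun v hv ↦ mem_box_of_supNorm_eq (mem_filter.mp hv).2).trans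
          (card_box_succ_le k)

lemma sum_supNorm_rpow_mul_max_rpow_le (hd : 1 ≤ d) {e f : ℝ} (he : e < d) (hef : d < e + f)
    {n : ℕ} (hn : 1 ≤ n) (t : Finset (Fin d → ℤ)) (ht : 0 ∉ t) :
    ∑ v ∈ t, (supNorm v : ℝ) ^ (-e) * max (n : ℝ) (supNorm v) ^ (-f)
      ≤ 2 * d * 3 ^ (d - 1) * (1 + (d - e)⁻¹ + (e + f - d)⁻¹) * (n : ℝ) ^ (d - e - f) := by
  have hpow : ∀ s ∈ Icc 1 (t.sup supNorm), ((2 * d * 3 ^ (d - 1) * s ^ (d - 1) : ℕ) : ℝ)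
      * ((s : ℝ) ^ (-e) * max (n : ℝ) s ^ (-f))
      = 2 * d * 3 ^ (d - 1) * ((s : ℝ) ^ ((d : ℝ) - 1 - e) * max (n : ℝ) s ^ (-f)) := by
    intro s hs
    have hs0 : (0 : ℝ) < s := by exact_mod_cast (mem_Icc.mp hs).1
    have hcast : (s : ℝ) ^ ((d : ℝ) - 1) = (s : ℝ) ^ (d - 1) := by
      rw [← rpow_natCast, Nat.cast_sub hd, Nat.cast_one]
    rw [sub_eq_add_neg _ e, rpow_add hs0, hcast]
    push_cast
    ring
  calc ∑ v ∈ t, (supNorm v : ℝ) ^ (-e) * max (n : ℝ) (supNorm v) ^ (-f)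
      ≤ ∑ s ∈ Icc 1 (t.sup supNorm), ((2 * d * 3 ^ (d - 1) * s ^ (d - 1) : ℕ) : ℝ)
          * ((s : ℝ) ^ (-e) * max (n : ℝ) s ^ (-f)) :=
        sum_comp_supNorm_le t ht fun s ↦ mul_nonneg (rpow_nonneg s.cast_nonneg _)
          (rpow_nonneg (s.cast_nonneg.trans (le_max_right _ _)) _)
    _ = 2 * d * 3 ^ (d - 1) * ∑ s ∈ Icc 1 (t.sup supNorm),
          (s : ℝ) ^ ((d : ℝ) - 1 - e) * max (n : ℝ) s ^ (-f) := by
        rw [sum_congr rfl hpow, mul_sum]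
    _ ≤ 2 * d * 3 ^ (d - 1) * ((1 + ((d - 1 - e) + 1)⁻¹ + (f - (d - 1 - e) - 1)⁻¹)
          * (n : ℝ) ^ ((d - 1 - e) + 1 - f)) := by
        gcongr
        exact sum_rpow_mul_max_rpow_neg_le (by linarith) (by linarith) hn _
    _ = 2 * d * 3 ^ (d - 1) * (1 + (d - e)⁻¹ + (e + f - d)⁻¹) * (n : ℝ) ^ (d - e - f) := by
        ring_nf

lemma exists_sum_supNorm_rpow_neg_mul_rpow_neg_le {l m : ℝ} (hl : 0 ≤ l) (hld : l < d)
    (hm : 0 ≤ m) (hmd : m < d) (hlm : d < l + m) :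
    ∃ C, ∀ k : Fin d → ℤ, k ≠ 0 → ∀ T : Finset ((Fin d → ℤ) × (Fin d → ℤ)),
      (∀ p ∈ T, p.1 ≠ 0 ∧ p.2 ≠ 0 ∧ p.1 + p.2 = k) →
        ∑ p ∈ T, (supNorm p.1 : ℝ) ^ (-l) * (supNorm p.2 : ℝ) ^ (-m)
          ≤ C * (supNorm k : ℝ) ^ (d - l - m) := by
  have hd : 1 ≤ d := by exact_mod_cast hl.trans_lt hld
  refine ⟨2 ^ l * (2 * d * 3 ^ (d - 1) * (1 + (d - m)⁻¹ + (m + l - d)⁻¹))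
    + 2 ^ m * (2 * d * 3 ^ (d - 1) * (1 + (d - l)⁻¹ + (l + m - d)⁻¹)), fun k hk T hT ↦ ?_⟩
  have hn := one_le_supNorm hk
  have hfst : ∀ p ∈ T, ∀ q ∈ T, p.1 = q.1 → p = q := fun p hp q hq h ↦
    Prod.ext h (add_left_cancel (a := p.1) (by rw [(hT p hp).2.2, h, (hT q hq).2.2]))
  have hsnd : ∀ p ∈ T, ∀ q ∈ T, p.2 = q.2 → p = q := fun p hp q hq h ↦
    Prod.ext (add_right_cancel (b := p.2) (by rw [(hT p hp).2.2, h, (hT q hq).2.2])) h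
  have hfst0 : 0 ∉ T.image Prod.fst := by
    simpa only [mem_image, not_exists, not_and] using fun p hp ↦ (hT p hp).1
  have hsnd0 : 0 ∉ T.image Prod.snd := by
    simpa only [mem_image, not_exists, not_and] using fun p hp ↦ (hT p hp).2.1
  have hpair : ∀ p ∈ T, (supNorm p.1 : ℝ) ^ (-l) * (supNorm p.2 : ℝ) ^ (-m)
      ≤ 2 ^ l * ((supNorm p.2 : ℝ) ^ (-m) * max (supNorm k : ℝ) (supNorm p.2) ^ (-l))
        + 2 ^ m * ((supNorm p.1 : ℝ) ^ (-l) * max (supNorm k : ℝ) (supNorm p.1) ^ (-m)) := by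
    intro p hp
    obtain ⟨h₁, h₂, hk⟩ := hT p hp
    refine rpow_neg_mul_rpow_neg_le (by exact_mod_cast one_le_supNorm h₁)
      (by exact_mod_cast one_le_supNorm h₂) ?_ hl hm
    simpa only [cast_supNorm, ← hk] using norm_add_le p.1 p.2
  calc ∑ p ∈ T, (supNorm p.1 : ℝ) ^ (-l) * (supNorm p.2 : ℝ) ^ (-m)
      ≤ 2 ^ l * ∑ u ∈ T.image Prod.snd,
            (supNorm u : ℝ) ^ (-m) * max (supNorm k : ℝ) (supNorm u) ^ (-l)
        + 2 ^ m * ∑ j ∈ T.image Prod.fst,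
            (supNorm j : ℝ) ^ (-l) * max (supNorm k : ℝ) (supNorm j) ^ (-m) := by
        rw [sum_image hfst, sum_image hsnd, mul_sum, mul_sum, ← sum_add_distrib]
        exact sum_le_sum hpair
    _ ≤ 2 ^ l * (2 * d * 3 ^ (d - 1) * (1 + (d - m)⁻¹ + (m + l - d)⁻¹)
            * (supNorm k : ℝ) ^ (d - m - l))
        + 2 ^ m * (2 * d * 3 ^ (d - 1) * (1 + (d - l)⁻¹ + (l + m - d)⁻¹)
            * (supNorm k : ℝ) ^ (d - l - m)) := by
        gcongr
        · exact sum_supNorm_rpow_mul_max_rpow_le hd hmd (by linarith) hn _ hsnd0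
        · exact sum_supNorm_rpow_mul_max_rpow_le hd hld hlm hn _ hfst0
    _ = _ := by rw [sub_sub, sub_sub, add_comm m l]; ring

lemma znorm_nonneg (v : Fin d → ℤ) : 0 ≤ znorm v := sqrt_nonneg _

lemma supNorm_le_znorm (v : Fin d → ℤ) : (supNorm v : ℝ) ≤ znorm v := by
  rw [cast_supNorm]
  refine (pi_norm_le_iff_of_nonneg (znorm_nonneg v)).mpr fun i ↦ ?_
  rw [Int.norm_eq_abs]
  exact abs_le_sqrt (single_le_sum (f := fun j ↦ ((v j : ℤ) : ℝ) ^ 2)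
    (fun j _ ↦ sq_nonneg _) (mem_univ i))

lemma znorm_le_sqrt_mul_supNorm (v : Fin d → ℤ) : znorm v ≤ √d * supNorm v := by
  rw [cast_supNorm, znorm, ← sqrt_sq (norm_nonneg v), ← sqrt_mul d.cast_nonneg]
  refine sqrt_le_sqrt ?_
  calc ∑ i, ((v i : ℤ) : ℝ) ^ 2 ≤ ∑ _i : Fin d, ‖v‖ ^ 2 := by
        refine sum_le_sum fun i _ ↦ ?_
        rw [← sq_abs, ← Int.norm_eq_abs]
        exact pow_le_pow_left₀ (norm_nonneg _) (norm_le_pi_norm v i) 2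
    _ = d * ‖v‖ ^ 2 := by simp

lemma one_div_znorm_rpow_mul_le {u v : Fin d → ℤ} (hu : u ≠ 0) (hv : v ≠ 0) {l m : ℝ}
    (hl : 0 ≤ l) (hm : 0 ≤ m) :
    1 / (znorm u ^ l * znorm v ^ m) ≤ (supNorm u : ℝ) ^ (-l) * (supNorm v : ℝ) ^ (-m) := by
  have key : ∀ {w : Fin d → ℤ}, w ≠ 0 → ∀ {e : ℝ}, 0 ≤ e →
      znorm w ^ (-e) ≤ (supNorm w : ℝ) ^ (-e) := fun hw _ he ↦
    rpow_le_rpow_of_nonpos (by exact_mod_cast one_le_supNorm hw) (supNorm_le_znorm _)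
      (neg_nonpos.mpr he)
  rw [one_div, mul_inv, ← rpow_neg (znorm_nonneg u), ← rpow_neg (znorm_nonneg v)]
  exact mul_le_mul (key hu hl) (key hv hm) (rpow_nonneg (znorm_nonneg v) _) (by positivity)

lemma supNorm_rpow_neg_le_sqrt_rpow_div {v : Fin d → ℤ} (hv : v ≠ 0) {s : ℝ} (hs : 0 ≤ s) :
    (supNorm v : ℝ) ^ (-s) ≤ √d ^ s / znorm v ^ s := by
  have hν : (0 : ℝ) < supNorm v := by exact_mod_cast one_le_supNorm hv
  have hz : 0 < znorm v := hν.trans_le (supNorm_le_znorm v)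
  rw [rpow_neg hν.le, inv_eq_one_div, div_le_div_iff₀ (by positivity) (by positivity), one_mul,
    ← mul_rpow (sqrt_nonneg _) hν.le]
  exact rpow_le_rpow hz.le (znorm_le_sqrt_mul_supNorm v) hs

theorem stmt0_general (d : ℕ) (l m : ℝ)
    (hl0 : 0 < l) (hld : l < d) (hm0 : 0 < m) (hmd : m < d) (hlm : l + m - d > 0) :
    ∃ C > 0, ∀ k : Fin d → ℤ, k ≠ 0 →
      (∑' p : {p : (Fin d → ℤ) × (Fin d → ℤ) // p.1 ≠ 0 ∧ p.2 ≠ 0 ∧ p.1 + p.2 = k},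
          1 / (znorm p.1.1 ^ l * znorm p.1.2 ^ m))
        ≤ C / znorm k ^ (l + m - d) := by
  obtain ⟨C, hC⟩ := exists_sum_supNorm_rpow_neg_mul_rpow_neg_le hl0.le hld hm0.le hmd (by linarith)
  have hA : 0 < max C 1 * √d ^ (l + m - d) :=
    mul_pos (lt_max_of_lt_right one_pos) (rpow_pos_of_pos (sqrt_pos.mpr (hl0.trans hld)) _)
  refine ⟨_, hA, fun k hk ↦ tsum_le_of_sum_le' ?_ fun T ↦ ?_⟩
  · exact div_nonneg hA.le (rpow_nonneg (znorm_nonneg k) _)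
  calc ∑ p ∈ T, 1 / (znorm p.1.1 ^ l * znorm p.1.2 ^ m)
      ≤ ∑ p ∈ T.map (Function.Embedding.subtype _),
          (supNorm p.1 : ℝ) ^ (-l) * (supNorm p.2 : ℝ) ^ (-m) := by
        rw [sum_map]
        exact sum_le_sum fun p _ ↦ one_div_znorm_rpow_mul_le p.2.1 p.2.2.1 hl0.le hm0.le
    _ ≤ C * (supNorm k : ℝ) ^ (d - l - m) := hC k hk _ fun p hp ↦ by
        obtain ⟨q, -, rfl⟩ := mem_map.mp hp
        exact q.2
    _ ≤ max C 1 * (supNorm k : ℝ) ^ (-(l + m - d)) := by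
        rw [show (d : ℝ) - l - m = -(l + m - d) by ring]
        gcongr
        exact le_max_left _ _
    _ ≤ max C 1 * √d ^ (l + m - d) / znorm k ^ (l + m - d) := by
        rw [mul_div_assoc]; gcongr; exact supNorm_rpow_neg_le_sqrt_rpow_div hk (by linarith)

/-- Convolution estimate (Lemma 3.10): for `0 < l, m < d` with `l + m - d > 0`, the sum over
nonzero lattice points `k₁ + k₂ = k` of `1/(|k₁|^l |k₂|^m)` is bounded by `C/|k|^(l+m-d)`. -/
theorem stmt0 (d : ℕ) (hd : 1 ≤ d) (l m : ℝ)
    (hl0 : 0 < l) (hld : l < d) (hm0 : 0 < m) (hmd : m < d) (hlm : l + m - d > 0) :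
    ∃ C > 0, ∀ k : Fin d → ℤ, k ≠ 0 →
      (∑' p : {p : (Fin d → ℤ) × (Fin d → ℤ) // p.1 ≠ 0 ∧ p.2 ≠ 0 ∧ p.1 + p.2 = k},
          1 / (znorm p.1.1 ^ l * znorm p.1.2 ^ m))
        ≤ C / znorm k ^ (l + m - d) :=
  stmt0_general d l m hl0 hld hm0 hmd hlm
end
end

section
/- For any 0 < η < 1 there is a constant C such that for all t > 0, all nonzero x, y ∈ ℝ^d, and all indices i, j, l ∈ {1,...,d}: |e^{-|x|²t} x_i P̂_{jl}(x) − e^{-|y|²t} y_i P̂_{jl}(y)| ≤ C |x − y|^η t^{-(1-η)/2}, where P̂_{jl}(x) = δ_{jl} − x_j x_l / |x|². -/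
/-!
Write `e^{-|x|²t} x_i P̂_{jl}(x) = G(x)_i P̂_{jl}(x)` with `G(x) = e^{-|x|²t} x`. Two bounds are
interpolated. Uniformly, `|G(x)| = |x| e^{-|x|²t} ≤ 1/(2√t)` since `e^{|x|²t} ≥ 1 + |x|²t ≥ 2|x|√t`,
and `|P̂| ≤ 2`. For the Lipschitz bound, `G` is smooth with `‖DG(x)‖ ≤ (1 + 2|x|²t) e^{-|x|²t} ≤ 2`,
while `P̂` is homogeneous of degree zero, so for `|y| ≤ |x|` its increment is `O(|x - y| / |x|)`,
which is compensated by the factor `|G(y)| ≤ |y| ≤ |x|`.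
-/

noncomputable section

open Real

lemma le_rpow_one_sub_mul_rpow_of_le_of_le {L A B θ : ℝ} (hL : 0 ≤ L) (hA : L ≤ A) (hB : L ≤ B)
    (hθ0 : 0 ≤ θ) (hθ1 : θ ≤ 1) : L ≤ A ^ (1 - θ) * B ^ θ :=
  calc L = L ^ (1 - θ) * L ^ θ := by rw [← rpow_add' hL (by norm_num), sub_add_cancel, rpow_one]
    _ ≤ A ^ (1 - θ) * B ^ θ := mul_le_mul (rpow_le_rpow hL hA (by linarith))
        (rpow_le_rpow hL hB hθ0) (by positivity) (rpow_nonneg (hL.trans hA) _)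

namespace NormedSpace

variable {E : Type*} [NormedAddCommGroup E] [NormedSpace ℝ E]

lemma norm_normalize_le (x : E) : ‖normalize x‖ ≤ 1 := by
  rcases eq_or_ne x 0 with rfl | hx
  · simp [normalize_zero_eq_zero]
  · exact (norm_normalize_eq_one_iff.2 hx).le

lemma norm_normalize_sub_normalize_le {x y : E} (hyx : ‖y‖ ≤ ‖x‖) :
    ‖normalize x - normalize y‖ ≤ 2 * ‖x - y‖ / ‖x‖ := by
  rcases eq_or_ne x 0 with rfl | hx
  · simp_all
  have hsplit :
      normalize x - normalize y = ‖x‖⁻¹ • (x - y) + (‖x‖⁻¹ * (‖y‖ - ‖x‖)) • normalize y := by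
    rcases eq_or_ne y 0 with rfl | hy
    · simp [normalize]
    · have hcoef : ‖x‖⁻¹ * (‖y‖ - ‖x‖) * ‖y‖⁻¹ = ‖x‖⁻¹ - ‖y‖⁻¹ := by
        field_simp [norm_ne_zero_iff.2 hy]
      simp only [normalize, smul_smul, hcoef]
      module
  rw [hsplit]
  calc _ ≤ ‖x‖⁻¹ * ‖x - y‖ + ‖x‖⁻¹ * ‖x - y‖ * 1 := by
        refine (norm_add_le _ _).trans (add_le_add ?_ ?_)
        · rw [norm_smul, norm_inv, norm_norm]
        · rw [norm_smul, norm_mul, norm_inv, norm_norm]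
          gcongr
          · rw [Real.norm_eq_abs, abs_sub_comm]; exact abs_norm_sub_norm_le x y
          · exact norm_normalize_le y
    _ = 2 * ‖x - y‖ / ‖x‖ := by ring

end NormedSpace

section
variable {E : Type*} [NormedAddCommGroup E] [InnerProductSpace ℝ E]

lemma hasFDerivAt_exp_neg_norm_sq_mul_smul (t : ℝ) (x : E) :
    HasFDerivAt (fun x : E => exp (-‖x‖ ^ 2 * t) • x)
      (exp (-‖x‖ ^ 2 * t) • (ContinuousLinearMap.id ℝ E -
        (2 * t) • (innerSL ℝ x).smulRight x)) x := by
  refine (((hasFDerivAt_id x).norm_sq.neg.mul_const t).exp.smul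
    (hasFDerivAt_id x)).congr_fderiv ?_
  ext v
  simp only [id_eq, Pi.neg_apply, neg_mul, ContinuousLinearMap.comp_id, smul_neg, smul_smul,
    add_apply, smul_apply, ContinuousLinearMap.id_apply, ContinuousLinearMap.smulRight_apply,
    neg_apply, coe_innerSL_apply, nsmul_eq_mul, Nat.cast_ofNat, smul_eq_mul, neg_smul, smul_sub,
    sub_apply]
  module

lemma norm_exp_neg_norm_sq_mul_smul_sub_le {t : ℝ} (ht : 0 ≤ t) (x y : E) :
    ‖exp (-‖x‖ ^ 2 * t) • x - exp (-‖y‖ ^ 2 * t) • y‖ ≤ 2 * ‖x - y‖ := by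
  refine convex_univ.norm_image_sub_le_of_norm_hasFDerivWithin_le
    (fun z _ => (hasFDerivAt_exp_neg_norm_sq_mul_smul t z).hasFDerivWithinAt) (fun z _ => ?_)
    (Set.mem_univ y) (Set.mem_univ x)
  rw [norm_smul, norm_of_nonneg (exp_pos _).le]
  calc exp (-‖z‖ ^ 2 * t) * ‖ContinuousLinearMap.id ℝ E - (2 * t) • (innerSL ℝ z).smulRight z‖
      ≤ exp (-‖z‖ ^ 2 * t) * (1 + 2 * (‖z‖ ^ 2 * t)) := by
        gcongr
        refine (norm_sub_le _ _).trans (add_le_add ContinuousLinearMap.norm_id_le ?_)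
        rw [norm_smul, ContinuousLinearMap.norm_smulRight_apply, innerSL_apply_norm,
          Real.norm_of_nonneg (by positivity)]
        exact le_of_eq (by ring)
    _ ≤ exp (-‖z‖ ^ 2 * t) * (2 * exp (‖z‖ ^ 2 * t)) := by
        gcongr; linarith [add_one_le_exp (‖z‖ ^ 2 * t)]
    _ = 2 := by rw [mul_left_comm, ← exp_add]; simp

lemma norm_exp_neg_norm_sq_mul_smul_le_norm {t : ℝ} (ht : 0 ≤ t) (x : E) :
    ‖exp (-‖x‖ ^ 2 * t) • x‖ ≤ ‖x‖ := by
  rw [norm_smul, norm_of_nonneg (exp_pos _).le]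
  exact mul_le_of_le_one_left (norm_nonneg x) (exp_le_one_iff.2 (by nlinarith [norm_nonneg x]))

lemma norm_exp_neg_norm_sq_mul_smul_le {t : ℝ} (ht : 0 < t) (x : E) :
    ‖exp (-‖x‖ ^ 2 * t) • x‖ ≤ 1 / (2 * √t) := by
  have hs : 0 < √t := sqrt_pos.2 ht
  have hAMGM : 2 * (‖x‖ * √t) ≤ exp (‖x‖ ^ 2 * t) := by
    nlinarith [add_one_le_exp (‖x‖ ^ 2 * t), sq_nonneg (‖x‖ * √t - 1), sq_sqrt ht.le]
  rw [norm_smul, norm_of_nonneg (exp_pos _).le, neg_mul, exp_neg, le_div_iff₀ (by positivity)]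
  calc (exp (‖x‖ ^ 2 * t))⁻¹ * ‖x‖ * (2 * √t) = (exp (‖x‖ ^ 2 * t))⁻¹ * (2 * (‖x‖ * √t)) := by
        ring
    _ ≤ (exp (‖x‖ ^ 2 * t))⁻¹ * exp (‖x‖ ^ 2 * t) := by gcongr
    _ = 1 := inv_mul_cancel₀ (exp_pos _).ne'
end

def lerayFourierSymbol {d : ℕ} (x : EuclideanSpace ℝ (Fin d)) (j l : Fin d) : ℝ :=
  (if j = l then 1 else 0) - x j * x l / ‖x‖ ^ 2

def heatLeraySymbol {d : ℕ} (t : ℝ) (x : EuclideanSpace ℝ (Fin d)) (i j l : Fin d) : ℝ :=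
  exp (-‖x‖ ^ 2 * t) * x i * lerayFourierSymbol x j l

section
variable {d : ℕ}

lemma lerayFourierSymbol_eq_normalize (x : EuclideanSpace ℝ (Fin d)) (j l : Fin d) :
    lerayFourierSymbol x j l =
      (if j = l then 1 else 0) - NormedSpace.normalize x j * NormedSpace.normalize x l := by
  simp only [lerayFourierSymbol, NormedSpace.normalize, PiLp.smul_apply, smul_eq_mul,
    div_eq_mul_inv]
  ring

lemma EuclideanSpace.abs_apply_le_norm (x : EuclideanSpace ℝ (Fin d)) (i : Fin d) :
    |x i| ≤ ‖x‖ :=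
  PiLp.norm_apply_le x i

lemma abs_lerayFourierSymbol_le (x : EuclideanSpace ℝ (Fin d)) (j l : Fin d) :
    |lerayFourierSymbol x j l| ≤ 2 := by
  have hu := NormedSpace.norm_normalize_le x
  have hj := (EuclideanSpace.abs_apply_le_norm (NormedSpace.normalize x) j).trans hu
  have hl := (EuclideanSpace.abs_apply_le_norm (NormedSpace.normalize x) l).trans hu
  have hδ : |(if j = l then 1 else 0 : ℝ)| ≤ 1 := by split_ifs <;> simp
  rw [lerayFourierSymbol_eq_normalize]
  refine (abs_sub _ _).trans ?_
  rw [abs_mul]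
  nlinarith [abs_nonneg (NormedSpace.normalize x l)]

lemma abs_lerayFourierSymbol_sub_le {x y : EuclideanSpace ℝ (Fin d)} (hyx : ‖y‖ ≤ ‖x‖)
    (j l : Fin d) :
    |lerayFourierSymbol x j l - lerayFourierSymbol y j l| ≤ 4 * ‖x - y‖ / ‖x‖ := by
  have hu := NormedSpace.norm_normalize_le x
  have hv := NormedSpace.norm_normalize_le y
  have huv := NormedSpace.norm_normalize_sub_normalize_le hyx
  set u := NormedSpace.normalize x
  set v := NormedSpace.normalize y
  have hdiff : ∀ k, |u k - v k| ≤ ‖u - v‖ := fun k => EuclideanSpace.abs_apply_le_norm (u - v) k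
  rw [lerayFourierSymbol_eq_normalize, lerayFourierSymbol_eq_normalize,
    show ∀ δ : ℝ, δ - u j * u l - (δ - v j * v l) = -((u j - v j) * u l + v j * (u l - v l))
      from fun δ => by ring, abs_neg]
  calc _ ≤ ‖u - v‖ * 1 + 1 * ‖u - v‖ := by
        refine (abs_add_le _ _).trans (add_le_add ?_ ?_) <;> rw [abs_mul]
        · gcongr
          · exact hdiff j
          · exact (EuclideanSpace.abs_apply_le_norm u l).trans hu
        · gcongr
          · exact (EuclideanSpace.abs_apply_le_norm v j).trans hv
          · exact hdiff l
    _ ≤ 2 * (2 * ‖x - y‖ / ‖x‖) := by linarith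
    _ = 4 * ‖x - y‖ / ‖x‖ := by ring

lemma heatLeraySymbol_eq_smul_apply (t : ℝ) (x : EuclideanSpace ℝ (Fin d)) (i j l : Fin d) :
    heatLeraySymbol t x i j l = (exp (-‖x‖ ^ 2 * t) • x) i * lerayFourierSymbol x j l := by
  simp only [heatLeraySymbol, PiLp.smul_apply, smul_eq_mul, mul_assoc]

lemma abs_heatLeraySymbol_le {t : ℝ} (ht : 0 < t) (x : EuclideanSpace ℝ (Fin d)) (i j l : Fin d) :
    |heatLeraySymbol t x i j l| ≤ 1 / √t := by
  rw [heatLeraySymbol_eq_smul_apply, abs_mul]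
  calc _ ≤ 1 / (2 * √t) * 2 := by
        gcongr
        · exact (EuclideanSpace.abs_apply_le_norm _ i).trans (norm_exp_neg_norm_sq_mul_smul_le ht x)
        · exact abs_lerayFourierSymbol_le x j l
    _ = 1 / √t := by field_simp

lemma abs_heatLeraySymbol_sub_le_div_sqrt {t : ℝ} (ht : 0 < t) (x y : EuclideanSpace ℝ (Fin d))
    (i j l : Fin d) :
    |heatLeraySymbol t x i j l - heatLeraySymbol t y i j l| ≤ 2 / √t :=
  calc _ ≤ 1 / √t + 1 / √t := (abs_sub _ _).trans
        (add_le_add (abs_heatLeraySymbol_le ht x i j l) (abs_heatLeraySymbol_le ht y i j l))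
    _ = 2 / √t := by ring

lemma abs_heatLeraySymbol_sub_le_of_norm_le {t : ℝ} (ht : 0 ≤ t)
    {x y : EuclideanSpace ℝ (Fin d)} (hyx : ‖y‖ ≤ ‖x‖) (i j l : Fin d) :
    |heatLeraySymbol t x i j l - heatLeraySymbol t y i j l| ≤ 8 * ‖x - y‖ := by
  set G : EuclideanSpace ℝ (Fin d) → EuclideanSpace ℝ (Fin d) := fun z => exp (-‖z‖ ^ 2 * t) • z
  have hG : |G x i - G y i| ≤ 2 * ‖x - y‖ :=
    (EuclideanSpace.abs_apply_le_norm (G x - G y) i).trans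
      (norm_exp_neg_norm_sq_mul_smul_sub_le ht x y)
  have hGy : |G y i| ≤ ‖x‖ :=
    ((EuclideanSpace.abs_apply_le_norm _ i).trans
      (norm_exp_neg_norm_sq_mul_smul_le_norm ht y)).trans hyx
  rw [heatLeraySymbol_eq_smul_apply, heatLeraySymbol_eq_smul_apply,
    show ∀ a b p q : ℝ, a * p - b * q = (a - b) * p + b * (p - q) from fun _ _ _ _ => by ring]
  calc _ ≤ 2 * ‖x - y‖ * 2 + ‖x‖ * (4 * ‖x - y‖ / ‖x‖) := by
        refine (abs_add_le _ _).trans (add_le_add ?_ ?_) <;> rw [abs_mul]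
        · gcongr
          exact abs_lerayFourierSymbol_le x j l
        · gcongr
          exact abs_lerayFourierSymbol_sub_le hyx j l
    _ ≤ 8 * ‖x - y‖ := by
        rcases (norm_nonneg x).eq_or_lt with hx | hx
        · rw [← hx]; linarith [norm_nonneg (x - y)]
        · rw [mul_div_cancel₀ _ hx.ne']; linarith

lemma abs_heatLeraySymbol_sub_le {t : ℝ} (ht : 0 ≤ t) (x y : EuclideanSpace ℝ (Fin d))
    (i j l : Fin d) :
    |heatLeraySymbol t x i j l - heatLeraySymbol t y i j l| ≤ 8 * ‖x - y‖ := by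
  rcases le_total ‖y‖ ‖x‖ with hyx | hxy
  · exact abs_heatLeraySymbol_sub_le_of_norm_le ht hyx i j l
  · rw [abs_sub_comm, norm_sub_rev]
    exact abs_heatLeraySymbol_sub_le_of_norm_le ht hxy i j l

end

theorem stmt2_general (d : ℕ) (η : ℝ) (hη0 : 0 < η) (hη1 : η < 1) :
    ∃ C > 0, ∀ t : ℝ, 0 < t → ∀ x y : EuclideanSpace ℝ (Fin d), x ≠ 0 → y ≠ 0 →
      ∀ i j l : Fin d,
        |Real.exp (-‖x‖ ^ 2 * t) * x i *
            ((if j = l then (1 : ℝ) else 0) - x j * x l / ‖x‖ ^ 2) -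
          Real.exp (-‖y‖ ^ 2 * t) * y i *
            ((if j = l then (1 : ℝ) else 0) - y j * y l / ‖y‖ ^ 2)|
          ≤ C * ‖x - y‖ ^ η * t ^ (-(1 - η) / 2) := by
  refine ⟨2 ^ (1 - η) * 8 ^ η, by positivity, fun t ht x y _ _ i j l => ?_⟩
  have hunif : |heatLeraySymbol t x i j l - heatLeraySymbol t y i j l|
      ≤ 2 * t ^ (-(1 / 2) : ℝ) := by
    rw [rpow_neg ht.le, ← sqrt_eq_rpow, ← div_eq_mul_inv]
    exact abs_heatLeraySymbol_sub_le_div_sqrt ht x y i j l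
  refine (le_rpow_one_sub_mul_rpow_of_le_of_le (abs_nonneg _) hunif
    (abs_heatLeraySymbol_sub_le ht.le x y i j l) hη0.le hη1.le).trans_eq ?_
  rw [mul_rpow (by norm_num) (by positivity), mul_rpow (by norm_num) (norm_nonneg _),
    ← rpow_mul ht.le]
  ring_nf

/-- Lemma 3.11: interpolation bound for the heat-damped Leray symbol. For `0 < η < 1` there is
`C` such that for all `t > 0`, nonzero `x, y ∈ ℝ^d` and indices `i, j, l`,
`|e^{-|x|²t} x_i P̂_{jl}(x) − e^{-|y|²t} y_i P̂_{jl}(y)| ≤ C |x−y|^η t^{-(1-η)/2}`,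
where `P̂_{jl}(x) = δ_{jl} − x_j x_l / |x|²`. -/
theorem stmt2 (d : ℕ) (hd : 1 ≤ d) (η : ℝ) (hη0 : 0 < η) (hη1 : η < 1) :
    ∃ C > 0, ∀ t : ℝ, 0 < t → ∀ x y : EuclideanSpace ℝ (Fin d), x ≠ 0 → y ≠ 0 →
      ∀ i j l : Fin d,
        |Real.exp (-‖x‖ ^ 2 * t) * x i *
            ((if j = l then (1 : ℝ) else 0) - x j * x l / ‖x‖ ^ 2) -
          Real.exp (-‖y‖ ^ 2 * t) * y i *
            ((if j = l then (1 : ℝ) else 0) - y j * y l / ‖y‖ ^ 2)|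
          ≤ C * ‖x - y‖ ^ η * t ^ (-(1 - η) / 2) :=
  stmt2_general d η hη0 hη1
end
end
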